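/- Let ψ be a unit vector in (Fin 2 → Fin 2) → ℂ (a pure two-qubit state), let ρ(f,g) = ψ(f)·conj(ψ(g)) be its density matrix, let ρ_A be the reduced density matrix of the second qubit, and let C ≥ 0 be the concurrence defined by C² = 2(1 − Tr ρ_A²). Then the maximum of { Re Tr(ρ · B₂) : B₂ a two-qubit Bell operator } equals 2√(1 + C²). -/

import Mathlib

/-!
With `T i j = Re Tr(ρ σᵢ⊗σⱼ)` the correlation matrix of `ρ`, the Bell operator with settings
`c, d, c', d'` has value `⟪c, T (d + d')⟫ + ⟪c', T (d - d')⟫`. For a pure state,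
`TᵀT = C² I + b bᵀ` where `b` is the Bloch vector of `ρ_A` and `‖b‖² = 1 - C²`, so
`‖T u‖² = C² ‖u‖² + ⟪b, u⟫²`. The vectors `d ± d'` are orthogonal with squared norms summing to 4;
Cauchy–Schwarz together with Bessel's inequality for `b` against them bounds the value by
`2√(1 + C²)`, and the bound is attained with `d + d'` along `b` and `d - d'` orthogonal to it.
-/

open Matrix Complex Polynomial
open scoped ComplexOrder

noncomputable section

/-- The three Pauli matrices σ_x, σ_y, σ_z. -/
def pauli : Fin 3 → Matrix (Fin 2) (Fin 2) ℂ :=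
  ![!![0, 1; 1, 0], !![0, -Complex.I; Complex.I, 0], !![1, 0; 0, -1]]

/-- Kronecker product of `n` 2×2 matrices, as a matrix on `(Fin n → Fin 2)`. -/
def kron {n : ℕ} (M : Fin n → Matrix (Fin 2) (Fin 2) ℂ) :
    Matrix (Fin n → Fin 2) (Fin n → Fin 2) ℂ :=
  Matrix.of fun f g => ∏ k, M k (f k) (g k)

/-- The operator a¹σ_x + a²σ_y + a³σ_z associated to a vector a ∈ ℝ³. -/
def opOf (a : Fin 3 → ℝ) : Matrix (Fin 2) (Fin 2) ℂ :=
  ∑ i, (a i : ℂ) • pauli i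

/-- `B` is an `n`-qubit Bell operator:
`B = A₁⊗⋯⊗A_{n-1}⊗(A_n + A_n′) + A₁′⊗⋯⊗A_{n-1}′⊗(A_n − A_n′)`
for unit vectors `a k`, `a' k` in ℝ³. -/
def IsBellOp (n : ℕ) (B : Matrix (Fin n → Fin 2) (Fin n → Fin 2) ℂ) : Prop :=
  ∃ a a' : Fin n → Fin 3 → ℝ,
    (∀ k, ∑ i, (a k i) ^ 2 = 1) ∧ (∀ k, ∑ i, (a' k i) ^ 2 = 1) ∧
    B = kron (fun k => if (k : ℕ) = n - 1 then opOf (a k) + opOf (a' k) else opOf (a k))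
      + kron (fun k => if (k : ℕ) = n - 1 then opOf (a k) - opOf (a' k) else opOf (a' k))

/-- The generalized R-matrix of an `n`-qubit density matrix:
`R(I, j) = Re Tr(ρ · σ_{i₁}⊗⋯⊗σ_{i_{n-1}}⊗σ_j)`. -/
def Rmat {n : ℕ} (ρ : Matrix (Fin n → Fin 2) (Fin n → Fin 2) ℂ)
    (I : Fin (n - 1) → Fin 3) (j : Fin 3) : ℝ :=
  (Matrix.trace (ρ * kron fun k =>
    if h : (k : ℕ) < n - 1 then pauli (I ⟨k, h⟩) else pauli j)).re

/-- The 3×3 matrix `RᵀR` built from the generalized R-matrix. -/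
def RtR {n : ℕ} (ρ : Matrix (Fin n → Fin 2) (Fin n → Fin 2) ℂ) :
    Matrix (Fin 3) (Fin 3) ℝ :=
  Matrix.of fun j j' => ∑ I : Fin (n - 1) → Fin 3, Rmat ρ I j * Rmat ρ I j'

open scoped RealInnerProductSpace

section CHSH

variable {E F : Type*} [NormedAddCommGroup E] [InnerProductSpace ℝ E]
  [NormedAddCommGroup F] [InnerProductSpace ℝ F]

def chshValues (T : E →ₗ[ℝ] F) : Set ℝ :=
  {x | ∃ (c : F) (d : E) (c' : F) (d' : E), ‖c‖ = 1 ∧ ‖d‖ = 1 ∧ ‖c'‖ = 1 ∧ ‖d'‖ = 1 ∧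
    x = ⟪c, T (d + d')⟫ + ⟪c', T (d - d')⟫}

theorem exists_norm_eq_one_eq_norm_smul [Nontrivial E] (v : E) :
    ∃ e : E, ‖e‖ = 1 ∧ v = ‖v‖ • e := by
  rcases eq_or_ne v 0 with rfl | hv
  · obtain ⟨e, he⟩ := exists_norm_eq E zero_le_one
    exact ⟨e, he, by simp⟩
  · refine ⟨‖v‖⁻¹ • v, norm_smul_inv_norm hv, ?_⟩
    rw [smul_smul, mul_inv_cancel₀ (norm_ne_zero_iff.2 hv), one_smul]

theorem exists_norm_eq_one_inner_eq_zero (hE : 2 ≤ Module.finrank ℝ E) (v : E) :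
    ∃ e : E, ‖e‖ = 1 ∧ ⟪v, e⟫ = 0 := by
  have : FiniteDimensional ℝ E := Module.finite_of_finrank_pos (by omega)
  have hrank : 0 < Module.finrank ℝ (ℝ ∙ v)ᗮ := by
    have := (ℝ ∙ v).finrank_add_finrank_orthogonal
    have : Module.finrank ℝ (ℝ ∙ v) ≤ 1 := (finrank_span_le_card {v}).trans (by simp)
    omega
  have := Module.finrank_pos_iff.1 hrank
  obtain ⟨e, he⟩ := exists_norm_eq (ℝ ∙ v)ᗮ zero_le_one
  exact ⟨e, he, Submodule.inner_right_of_mem_orthogonal (Submodule.mem_span_singleton_self v) e.2⟩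

/-- Bessel's inequality for an orthogonal, not necessarily normalised, pair `p, q`. -/
theorem inner_sq_mul_norm_sq_add_inner_sq_mul_norm_sq_le {p q : E} (hpq : ⟪p, q⟫ = 0) (b : E) :
    ⟪b, p⟫ ^ 2 * ‖q‖ ^ 2 + ⟪b, q⟫ ^ 2 * ‖p‖ ^ 2 ≤ ‖b‖ ^ 2 * (‖p‖ ^ 2 * ‖q‖ ^ 2) := by
  set S := ⟪b, p⟫ ^ 2 * ‖q‖ ^ 2 + ⟪b, q⟫ ^ 2 * ‖p‖ ^ 2
  set w := (⟪b, p⟫ * ‖q‖ ^ 2) • p + (⟪b, q⟫ * ‖p‖ ^ 2) • q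
  have hbw : ⟪b, w⟫ = S := by
    simp only [w, S, inner_add_right, real_inner_smul_right]; ring
  have hww : ⟪w, w⟫ = ‖p‖ ^ 2 * ‖q‖ ^ 2 * S := by
    simp only [w, S, inner_add_left, inner_add_right, real_inner_smul_left, real_inner_smul_right,
      hpq, real_inner_comm p q]
    rw [real_inner_self_eq_norm_sq, real_inner_self_eq_norm_sq]
    ring
  have hcs := real_inner_mul_inner_self_le b w
  rw [hbw, hww, real_inner_self_eq_norm_sq] at hcs
  have hS : 0 ≤ S := by positivity
  rcases hS.eq_or_lt with h | h
  · rw [← h]; positivity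
  · nlinarith

theorem add_le_two_mul_sqrt {A B x y s t K β : ℝ} (hA : 0 ≤ A) (hB : 0 ≤ B) (hK : 0 ≤ K)
    (hA2 : A ^ 2 = K * x ^ 2 + s ^ 2) (hB2 : B ^ 2 = K * y ^ 2 + t ^ 2) (hxy : x ^ 2 + y ^ 2 = 4)
    (hs : s ^ 2 ≤ β * x ^ 2) (ht : t ^ 2 ≤ β * y ^ 2)
    (hst : s ^ 2 * y ^ 2 + t ^ 2 * x ^ 2 ≤ β * (x ^ 2 * y ^ 2)) :
    A + B ≤ 2 * √(2 * K + β) := by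
  suffices h : (A + B) ^ 2 ≤ 4 * (2 * K + β) by
    nlinarith [Real.sq_sqrt (show 0 ≤ 2 * K + β by nlinarith), Real.sqrt_nonneg (2 * K + β)]
  rcases eq_or_ne (x ^ 2 * y ^ 2) 0 with hxy0 | hxy0
  · rcases mul_eq_zero.1 hxy0 with hx | hy
    · have hA0 : A = 0 := by nlinarith
      subst hA0; nlinarith
    · have hB0 : B = 0 := by nlinarith
      subst hB0; nlinarith
  · have hcs : (A + B) ^ 2 * (x ^ 2 * y ^ 2) ≤ 4 * (2 * K + β) * (x ^ 2 * y ^ 2) :=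
      calc (A + B) ^ 2 * (x ^ 2 * y ^ 2)
          = (x ^ 2 + y ^ 2) * (A ^ 2 * y ^ 2 + B ^ 2 * x ^ 2) - (A * y ^ 2 - B * x ^ 2) ^ 2 := by
            ring
        _ ≤ 4 * (2 * K * (x ^ 2 * y ^ 2) + (s ^ 2 * y ^ 2 + t ^ 2 * x ^ 2)) := by
            rw [hxy, hA2, hB2]; nlinarith [sq_nonneg (A * y ^ 2 - B * x ^ 2)]
        _ ≤ 4 * (2 * K + β) * (x ^ 2 * y ^ 2) := by nlinarith
    exact le_of_mul_le_mul_right hcs (lt_of_le_of_ne (by positivity) hxy0.symm)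

theorem norm_smul_add_smul_eq_one {e₁ e₂ : E} (he₁ : ‖e₁‖ = 1) (he₂ : ‖e₂‖ = 1)
    (he₁₂ : ⟪e₁, e₂⟫ = 0) {a b : ℝ} (hab : a ^ 2 + b ^ 2 = 1) : ‖a • e₁ + b • e₂‖ = 1 := by
  have hsq : ‖a • e₁ + b • e₂‖ ^ 2 = 1 := by
    rw [norm_add_sq_real, real_inner_smul_left, real_inner_smul_right, he₁₂, norm_smul,
      norm_smul, he₁, he₂, Real.norm_eq_abs, Real.norm_eq_abs]
    nlinarith [sq_abs a, sq_abs b]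
  exact (pow_eq_one_iff_of_nonneg (norm_nonneg _) two_ne_zero).1 hsq

variable {T : E →ₗ[ℝ] F} {b : E} {K : ℝ}

theorem inner_add_inner_le_two_mul_sqrt (hK : 0 ≤ K)
    (hT : ∀ u, ‖T u‖ ^ 2 = K * ‖u‖ ^ 2 + ⟪b, u⟫ ^ 2) (hb : ‖b‖ ^ 2 = 1 - K)
    {c c' : F} {d d' : E} (hc : ‖c‖ = 1) (hd : ‖d‖ = 1) (hc' : ‖c'‖ = 1) (hd' : ‖d'‖ = 1) :
    ⟪c, T (d + d')⟫ + ⟪c', T (d - d')⟫ ≤ 2 * √(1 + K) := by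
  have hpq : ⟪d + d', d - d'⟫ = 0 := (real_inner_add_sub_eq_zero_iff d d').2 (hd.trans hd'.symm)
  have hsum : ‖d + d'‖ ^ 2 + ‖d - d'‖ ^ 2 = 4 := by
    rw [parallelogram_law_with_norm ℝ, hd, hd']; norm_num
  have hcs (u : E) : ⟪b, u⟫ ^ 2 ≤ (1 - K) * ‖u‖ ^ 2 := by
    rw [← hb, ← mul_pow, ← sq_abs]
    exact pow_le_pow_left₀ (abs_nonneg _) (abs_real_inner_le_norm b u) 2
  have hbessel := inner_sq_mul_norm_sq_add_inner_sq_mul_norm_sq_le hpq b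
  rw [hb] at hbessel
  have key := add_le_two_mul_sqrt (norm_nonneg (T (d + d'))) (norm_nonneg (T (d - d'))) hK
    (hT _) (hT _) hsum (hcs _) (hcs _) hbessel
  rw [show 2 * K + (1 - K) = 1 + K by ring] at key
  refine le_trans (add_le_add ?_ ?_) key
  · simpa [hc] using real_inner_le_norm c (T (d + d'))
  · simpa [hc'] using real_inner_le_norm c' (T (d - d'))

theorem isGreatest_chshValues (hE : 2 ≤ Module.finrank ℝ E) (hK : 0 ≤ K)
    (hT : ∀ u, ‖T u‖ ^ 2 = K * ‖u‖ ^ 2 + ⟪b, u⟫ ^ 2) (hb : ‖b‖ ^ 2 = 1 - K) :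
    IsGreatest (chshValues T) (2 * √(1 + K)) := by
  refine ⟨?_, fun x ⟨c, d, c', d', hc, hd, hc', hd', hx⟩ =>
    hx ▸ inner_add_inner_le_two_mul_sqrt hK hT hb hc hd hc' hd'⟩
  have : Nontrivial E := Module.nontrivial_of_finrank_pos (R := ℝ) (by omega)
  obtain ⟨e₁, he₁, hbe₁⟩ := exists_norm_eq_one_eq_norm_smul b
  obtain ⟨e₂, he₂, he₁₂⟩ := exists_norm_eq_one_inner_eq_zero hE e₁
  have hTe₁ : ‖T e₁‖ = 1 := by
    rw [← pow_eq_one_iff_of_nonneg (norm_nonneg _) two_ne_zero, hT, he₁, hbe₁,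
      real_inner_smul_left, real_inner_self_eq_norm_sq, he₁]
    linear_combination hb
  have hTe₂ : ‖T e₂‖ = √K := by
    rw [← Real.sqrt_sq (norm_nonneg _), hT, he₂, hbe₁, real_inner_smul_left, he₁₂]
    simp
  have : Nontrivial F := nontrivial_of_ne (T e₁) 0 fun h => by simp [h] at hTe₁
  obtain ⟨c', hc', hTc'⟩ := exists_norm_eq_one_eq_norm_smul (T e₂)
  set γ := √(1 + K)
  have hγ : γ ^ 2 = 1 + K := Real.sq_sqrt (by linarith)
  have hγ0 : γ ≠ 0 := by positivity
  have hunit : (γ⁻¹) ^ 2 + (√K / γ) ^ 2 = 1 := by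
    field_simp; rw [Real.sq_sqrt hK, hγ]
  -- `d + d'` and `d - d'` lie along `e₁` and `e₂`, with lengths proportional to `‖T e₁‖ = 1` and
  -- `‖T e₂‖ = √K`: the equality case of the Cauchy–Schwarz step in `add_le_two_mul_sqrt`.
  refine ⟨T e₁, γ⁻¹ • e₁ + (√K / γ) • e₂, c', γ⁻¹ • e₁ + (-(√K / γ)) • e₂,
    hTe₁, norm_smul_add_smul_eq_one he₁ he₂ he₁₂ hunit, hc',
    norm_smul_add_smul_eq_one he₁ he₂ he₁₂ (by rwa [neg_sq]), ?_⟩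
  have hsum : γ⁻¹ • e₁ + (√K / γ) • e₂ + (γ⁻¹ • e₁ + (-(√K / γ)) • e₂) = (2 * γ⁻¹) • e₁ := by
    module
  have hdiff : γ⁻¹ • e₁ + (√K / γ) • e₂ - (γ⁻¹ • e₁ + (-(√K / γ)) • e₂) = (2 * (√K / γ)) • e₂ := by
    module
  rw [hsum, hdiff, map_smul, map_smul, real_inner_smul_right, real_inner_smul_right,
    real_inner_self_eq_norm_sq, hTe₁, hTc', real_inner_smul_right, real_inner_self_eq_norm_sq, hc',
    hTe₂]
  field_simp
  rw [Real.sq_sqrt hK, hγ]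

end CHSH

theorem EuclideanSpace.real_norm_eq_one_iff {n : Type*} [Fintype n] (x : EuclideanSpace ℝ n) :
    ‖x‖ = 1 ↔ ∑ i, x i ^ 2 = 1 := by
  rw [← pow_eq_one_iff_of_nonneg (norm_nonneg x) two_ne_zero, EuclideanSpace.real_norm_sq_eq]

section toLpLin

variable {n : Type*} [Fintype n] [DecidableEq n]

theorem inner_toLpLin (M : Matrix n n ℝ) (x y : EuclideanSpace ℝ n) :
    ⟪x, toLpLin 2 2 M y⟫ = x.ofLp ⬝ᵥ M *ᵥ y.ofLp := by
  rw [EuclideanSpace.inner_eq_star_dotProduct, ofLp_toLpLin, star_trivial, dotProduct_comm,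
    toLin'_apply]

theorem norm_toLpLin_sq {M : Matrix n n ℝ} {K : ℝ} {b : n → ℝ}
    (hM : Mᵀ * M = K • 1 + vecMulVec b b) (u : EuclideanSpace ℝ n) :
    ‖toLpLin 2 2 M u‖ ^ 2 = K * ‖u‖ ^ 2 + ⟪WithLp.toLp 2 b, u⟫ ^ 2 := by
  rw [← real_inner_self_eq_norm_sq, ← real_inner_self_eq_norm_sq, inner_toLpLin, ofLp_toLpLin,
    toLin'_apply, dotProduct_mulVec, ← vecMul_transpose, vecMul_vecMul, hM,
    EuclideanSpace.inner_eq_star_dotProduct, EuclideanSpace.inner_eq_star_dotProduct]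
  simp only [vecMul_add, vecMul_smul, vecMul_one, vecMul_vecMulVec, add_dotProduct,
    smul_dotProduct, smul_eq_mul, star_trivial, dotProduct_comm b]
  ring

theorem chshValues_toLpLin (M : Matrix n n ℝ) :
    chshValues (toLpLin 2 2 M) = {x | ∃ c d c' d' : n → ℝ, ∑ i, c i ^ 2 = 1 ∧ ∑ i, d i ^ 2 = 1 ∧
      ∑ i, c' i ^ 2 = 1 ∧ ∑ i, d' i ^ 2 = 1 ∧
      x = c ⬝ᵥ M *ᵥ (d + d') + c' ⬝ᵥ M *ᵥ (d - d')} := by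
  ext x
  simp only [chshValues, EuclideanSpace.real_norm_eq_one_iff, inner_toLpLin, Set.mem_ofPred_eq]
  constructor
  · rintro ⟨c, d, c', d', hc, hd, hc', hd', rfl⟩
    exact ⟨c.ofLp, d.ofLp, c'.ofLp, d'.ofLp, hc, hd, hc', hd', by simp⟩
  · rintro ⟨c, d, c', d', hc, hd, hc', hd', rfl⟩
    exact ⟨WithLp.toLp 2 c, WithLp.toLp 2 d, WithLp.toLp 2 c', WithLp.toLp 2 d',
      hc, hd, hc', hd', by simp⟩

end toLpLin

def correlationMatrix (ρ : Matrix (Fin 2 → Fin 2) (Fin 2 → Fin 2) ℂ) : Matrix (Fin 3) (Fin 3) ℝ :=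
  Matrix.of fun i j => (trace (ρ * kron ![pauli i, pauli j])).re

def blochVector (A : Matrix (Fin 2) (Fin 2) ℂ) : Fin 3 → ℝ :=
  fun j => (trace (A * pauli j)).re

def pureDensityMatrix (ψ : (Fin 2 → Fin 2) → ℂ) : Matrix (Fin 2 → Fin 2) (Fin 2 → Fin 2) ℂ :=
  Matrix.of fun f g => ψ f * starRingEnd ℂ (ψ g)

def traceOutFirst (ρ : Matrix (Fin 2 → Fin 2) (Fin 2 → Fin 2) ℂ) : Matrix (Fin 2) (Fin 2) ℂ :=
  Matrix.of fun a a' => ∑ b : Fin 2, ρ ![b, a] ![b, a']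

theorem opOf_add (c d : Fin 3 → ℝ) : opOf (c + d) = opOf c + opOf d := by
  simp only [opOf, Pi.add_apply, Complex.ofReal_add, add_smul, Finset.sum_add_distrib]

theorem opOf_sub (c d : Fin 3 → ℝ) : opOf (c - d) = opOf c - opOf d := by
  simp only [opOf, Pi.sub_apply, Complex.ofReal_sub, sub_smul, Finset.sum_sub_distrib]

theorem kron_opOf_opOf (c d : Fin 3 → ℝ) :
    kron ![opOf c, opOf d] = ∑ i, ∑ j, ((c i * d j : ℝ) : ℂ) • kron ![pauli i, pauli j] := by
  ext f g
  simp only [kron, opOf, of_apply, Fin.prod_univ_two, Matrix.cons_val_zero, Matrix.cons_val_one,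
    Matrix.sum_apply, Matrix.smul_apply, smul_eq_mul, Finset.sum_mul_sum, Complex.ofReal_mul]
  exact Finset.sum_congr rfl fun i _ => Finset.sum_congr rfl fun j _ => by ring

theorem re_trace_mul_kron_opOf (ρ : Matrix (Fin 2 → Fin 2) (Fin 2 → Fin 2) ℂ) (c d : Fin 3 → ℝ) :
    (trace (ρ * kron ![opOf c, opOf d])).re = c ⬝ᵥ correlationMatrix ρ *ᵥ d := by
  simp only [kron_opOf_opOf, Matrix.mul_smul, trace_sum, trace_smul,
    Complex.re_sum, smul_eq_mul, Complex.re_ofReal_mul, dotProduct, mulVec, correlationMatrix,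
    of_apply, Finset.mul_sum]
  exact Finset.sum_congr rfl fun i _ => Finset.sum_congr rfl fun j _ => by ring

theorem kron_fin_two (M : Fin 2 → Matrix (Fin 2) (Fin 2) ℂ) : kron M = kron ![M 0, M 1] := by
  congr 1; funext k; fin_cases k <;> rfl

theorem isBellOp_two_iff (B : Matrix (Fin 2 → Fin 2) (Fin 2 → Fin 2) ℂ) :
    IsBellOp 2 B ↔ ∃ c d c' d' : Fin 3 → ℝ, ∑ i, c i ^ 2 = 1 ∧ ∑ i, d i ^ 2 = 1 ∧
      ∑ i, c' i ^ 2 = 1 ∧ ∑ i, d' i ^ 2 = 1 ∧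
      B = kron ![opOf c, opOf (d + d')] + kron ![opOf c', opOf (d - d')] := by
  constructor
  · rintro ⟨a, a', ha, ha', rfl⟩
    refine ⟨a 0, a 1, a' 0, a' 1, ha 0, ha 1, ha' 0, ha' 1, ?_⟩
    congr 1 <;> rw [kron_fin_two] <;> simp [opOf_add, opOf_sub]
  · rintro ⟨c, d, c', d', hc, hd, hc', hd', rfl⟩
    refine ⟨![c, d], ![c', d'], Fin.forall_fin_two.2 ⟨hc, hd⟩, Fin.forall_fin_two.2 ⟨hc', hd'⟩, ?_⟩
    symm
    congr 1 <;> rw [kron_fin_two] <;> simp [opOf_add, opOf_sub]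

theorem setOf_isBellOp_two_eq_chshValues (ρ : Matrix (Fin 2 → Fin 2) (Fin 2 → Fin 2) ℂ) :
    {x : ℝ | ∃ B, IsBellOp 2 B ∧ x = (trace (ρ * B)).re} =
      chshValues (toLpLin 2 2 (correlationMatrix ρ)) := by
  have hvalue (c d c' d' : Fin 3 → ℝ) :
      (trace (ρ * (kron ![opOf c, opOf (d + d')] + kron ![opOf c', opOf (d - d')]))).re =
        c ⬝ᵥ correlationMatrix ρ *ᵥ (d + d') + c' ⬝ᵥ correlationMatrix ρ *ᵥ (d - d') := by
    rw [Matrix.mul_add, trace_add, Complex.add_re, re_trace_mul_kron_opOf, re_trace_mul_kron_opOf]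
  rw [chshValues_toLpLin]
  ext x
  simp only [Set.mem_ofPred_eq, isBellOp_two_iff]
  constructor
  · rintro ⟨_, ⟨c, d, c', d', hc, hd, hc', hd', rfl⟩, rfl⟩
    exact ⟨c, d, c', d', hc, hd, hc', hd', hvalue c d c' d'⟩
  · rintro ⟨c, d, c', d', hc, hd, hc', hd', rfl⟩
    exact ⟨_, ⟨c, d, c', d', hc, hd, hc', hd', rfl⟩, (hvalue c d c' d').symm⟩

theorem sum_fin_two_arrow {M : Type*} [AddCommMonoid M] (F : (Fin 2 → Fin 2) → M) :
    ∑ f, F f = F ![0, 0] + F ![0, 1] + F ![1, 0] + F ![1, 1] := by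
  rw [← (finTwoArrowEquiv (Fin 2)).symm.sum_comp]
  simp [Fintype.sum_prod_type, finTwoArrowEquiv, Fin.sum_univ_two, add_assoc]

theorem transpose_correlationMatrix_mul_self (ψ : (Fin 2 → Fin 2) → ℂ) :
    (correlationMatrix (pureDensityMatrix ψ))ᵀ * correlationMatrix (pureDensityMatrix ψ) =
      (2 * ((∑ f, Complex.normSq (ψ f)) ^ 2
        - (trace (traceOutFirst (pureDensityMatrix ψ) * traceOutFirst (pureDensityMatrix ψ))).re))
        • (1 : Matrix (Fin 3) (Fin 3) ℝ)
      + vecMulVec (blochVector (traceOutFirst (pureDensityMatrix ψ)))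
          (blochVector (traceOutFirst (pureDensityMatrix ψ))) := by
  ext j j'
  fin_cases j <;> fin_cases j' <;>
    · simp [Matrix.mul_apply, Matrix.trace, Fin.sum_univ_two, Fin.sum_univ_three, sum_fin_two_arrow,
        correlationMatrix, blochVector, pureDensityMatrix, traceOutFirst, pauli, kron,
        Fin.prod_univ_two, Complex.normSq_apply, vecMulVec_apply]
      ring

theorem sum_blochVector_sq (ψ : (Fin 2 → Fin 2) → ℂ) :
    ∑ j, blochVector (traceOutFirst (pureDensityMatrix ψ)) j ^ 2 =
      2 * (trace (traceOutFirst (pureDensityMatrix ψ) * traceOutFirst (pureDensityMatrix ψ))).re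
        - (∑ f, Complex.normSq (ψ f)) ^ 2 := by
  simp [Matrix.mul_apply, Matrix.trace, Fin.sum_univ_two, Fin.sum_univ_three, sum_fin_two_arrow,
    blochVector, pureDensityMatrix, traceOutFirst, pauli, Complex.normSq_apply]
  ring

theorem two_qubit_bell_max_concurrence_general
    (ψ : (Fin 2 → Fin 2) → ℂ) (hψ : ∑ f, Complex.normSq (ψ f) = 1)
    (ρ : Matrix (Fin 2 → Fin 2) (Fin 2 → Fin 2) ℂ)
    (hρ : ρ = Matrix.of fun f g => ψ f * (starRingEnd ℂ) (ψ g))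
    (ρA : Matrix (Fin 2) (Fin 2) ℂ)
    (hρA : ρA = Matrix.of fun a a' => ∑ b : Fin 2, ρ ![b, a] ![b, a'])
    (Cc : ℝ)
    (hCc : Cc ^ 2 = 2 * (1 - (Matrix.trace (ρA * ρA)).re)) :
    IsGreatest {x : ℝ | ∃ B, IsBellOp 2 B ∧ x = (Matrix.trace (ρ * B)).re}
      (2 * Real.sqrt (1 + Cc ^ 2)) := by
  obtain rfl : ρ = pureDensityMatrix ψ := hρ
  replace hρA : ρA = traceOutFirst (pureDensityMatrix ψ) := hρA
  rw [setOf_isBellOp_two_eq_chshValues]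
  refine isGreatest_chshValues (b := WithLp.toLp 2 (blochVector ρA)) (by simp) (sq_nonneg Cc)
    (norm_toLpLin_sq ?_) ?_
  · rw [transpose_correlationMatrix_mul_self, ← hρA, hψ, one_pow, ← hCc]
  · rw [EuclideanSpace.real_norm_sq_eq, hρA, sum_blochVector_sq, ← hρA, hψ]
    linarith

/-- For a pure two-qubit state `ψ` with concurrence `C` (defined by
`C² = 2(1 − Tr ρ_A²)` where `ρ_A` is the reduced density matrix of the second qubit),
the maximum of `Re Tr(ρ·B₂)` over two-qubit Bell operators equals `2√(1 + C²)`. -/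
theorem two_qubit_bell_max_concurrence
    (ψ : (Fin 2 → Fin 2) → ℂ) (hψ : ∑ f, Complex.normSq (ψ f) = 1)
    (ρ : Matrix (Fin 2 → Fin 2) (Fin 2 → Fin 2) ℂ)
    (hρ : ρ = Matrix.of fun f g => ψ f * (starRingEnd ℂ) (ψ g))
    (ρA : Matrix (Fin 2) (Fin 2) ℂ)
    (hρA : ρA = Matrix.of fun a a' => ∑ b : Fin 2, ρ ![b, a] ![b, a'])
    (Cc : ℝ) (hCc0 : 0 ≤ Cc)
    (hCc : Cc ^ 2 = 2 * (1 - (Matrix.trace (ρA * ρA)).re)) :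
    IsGreatest {x : ℝ | ∃ B, IsBellOp 2 B ∧ x = (Matrix.trace (ρ * B)).re}
      (2 * Real.sqrt (1 + Cc ^ 2)) :=
  two_qubit_bell_max_concurrence_general ψ hψ ρ hρ ρA hρA Cc hCc
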